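/- arXiv:0911.3830 — 7 statements merged into one kernel-verified Lean document; each statement's English description precedes it below -/
import Mathlib

section
/- Let K be a field, α an automorphism of K with fixed field F, and a₀,…,a_{n-1} elements of K cyclically permuted by α (i.e., α(a_i)=a_{i+1 mod n}). Let V be the n×n Vandermonde matrix with rows (1, a_i, a_i², …, a_i^{n-1}), assumed invertible (the a_i distinct), and let C be the n×n cyclic permutation matrix (C e_i = e_{i+1 mod n} on standard basis columns, i.e., c_{i,i-1}=1 for 2≤i≤n, c_{1,n}=1, zeros elsewhere). Then every entry of V⁻¹CV lies in F. -/
/-!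
Applying `α` entrywise to `V` permutes its rows cyclically: `V^α = P * V` with `P` the
permutation matrix of `i ↦ i + 1`, while `C = P⁻¹` has entries in the prime field. Hence
`(V⁻¹ * C * V)^α = V⁻¹ * P⁻¹ * C * P * V = V⁻¹ * C * V`, as `P` commutes with `C`.
-/

open Matrix

namespace Matrix

section Conjugation

variable {n R : Type*} [Fintype n] [DecidableEq n] [CommRing R]

theorem map_inv_mul_mul_eq_self (f : R →+* R) {V P M : Matrix n n R}
    (hV : IsUnit V.det) (hVf : V.map f = P * V) (hMf : M.map f = M) (hPM : Commute P M) :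
    (V⁻¹ * M * V).map f = V⁻¹ * M * V := by
  have hPV : IsUnit (P * V).det := by
    rw [← hVf]
    exact f.map_det V ▸ hV.map f
  have hP : IsUnit P.det := isUnit_of_mul_isUnit_left (det_mul P V ▸ hPV)
  have hVinv : V⁻¹.map f = V⁻¹ * P⁻¹ := by
    rw [← mul_inv_rev, ← hVf]
    refine (inv_eq_left_inv ?_).symm
    rw [← Matrix.map_mul, nonsing_inv_mul _ hV, Matrix.map_one _ f.map_zero f.map_one]
  calc (V⁻¹ * M * V).map f = V⁻¹ * P⁻¹ * M * (P * V) := by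
        rw [Matrix.map_mul, Matrix.map_mul, hVinv, hMf, hVf]
    _ = V⁻¹ * (P⁻¹ * (P * M)) * V := by
        rw [hPM.eq]
        simp only [Matrix.mul_assoc]
    _ = V⁻¹ * M * V := by
        rw [← Matrix.mul_assoc P⁻¹, nonsing_inv_mul _ hP, Matrix.one_mul]

theorem commute_permMatrix_inv (σ : Equiv.Perm n) :
    Commute (σ.permMatrix R) (σ⁻¹.permMatrix R) := by
  rw [Commute, SemiconjBy, ← permMatrix_mul, ← permMatrix_mul, mul_inv_cancel, inv_mul_cancel]

end Conjugation

theorem map_vandermonde {n : ℕ} {R S : Type*} [CommRing R] [CommRing S] (f : R →+* S)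
    (v : Fin n → R) : (vandermonde v).map f = vandermonde (f ∘ v) := by
  ext i j
  simp [vandermonde_apply]

theorem vandermonde_comp_perm {n : ℕ} {R : Type*} [CommRing R] (v : Fin n → R)
    (σ : Equiv.Perm (Fin n)) : vandermonde (v ∘ σ) = σ.permMatrix R * vandermonde v := by
  rw [PEquiv.toMatrix_toPEquiv_mul]
  rfl

end Matrix

theorem Fin.val_add_one_eq_mod {n : ℕ} [NeZero n] (i : Fin n) :
    ((i + 1 : Fin n) : ℕ) = ((i : ℕ) + 1) % n := by
  simp [Fin.val_add]

theorem stmt0_general {K : Type*} [Field K] (α : K ≃+* K) {n : ℕ} (hn : 0 < n)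
    (a : Fin n → K)
    (hperm : ∀ i : Fin n, α (a i) = a ⟨((i : ℕ) + 1) % n, Nat.mod_lt _ hn⟩)
    (V C : Matrix (Fin n) (Fin n) K)
    (hV : V = Matrix.of fun (i j : Fin n) => a i ^ (j : ℕ))
    (hVunit : IsUnit V)
    (hC : C = Matrix.of fun (i j : Fin n) => if (i : ℕ) = ((j : ℕ) + 1) % n then (1 : K) else 0) :
    ∀ i j, α ((V⁻¹ * C * V) i j) = (V⁻¹ * C * V) i j := by
  have : NeZero n := ⟨hn.ne'⟩
  set σ : Equiv.Perm (Fin n) := Equiv.addRight 1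
  have hshift : (α : K →+* K) ∘ a = a ∘ σ := funext fun i =>
    (hperm i).trans (congrArg a (Fin.ext (Fin.val_add_one_eq_mod i).symm))
  have hVα : V.map (α : K →+* K) = σ.permMatrix K * V := by
    rw [hV, ← vandermonde, map_vandermonde, hshift, vandermonde_comp_perm]
  have hCσ : C = σ⁻¹.permMatrix K := by
    ext i j
    rw [hC, of_apply, Equiv.Perm.permMatrix, PEquiv.toMatrix_apply]
    refine if_congr ?_ rfl rfl
    rw [← Fin.val_add_one_eq_mod, Fin.val_inj, Equiv.toPEquiv_apply, Option.mem_some_iff]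
    simp [σ, eq_add_neg_iff_add_eq, eq_comm]
  have hCα : C.map (α : K →+* K) = C := hCσ ▸ PEquiv.map_toMatrix _ _
  have key := map_inv_mul_mul_eq_self (α : K →+* K) ((isUnit_iff_isUnit_det V).mp hVunit)
    hVα hCα (hCσ ▸ commute_permMatrix_inv σ)
  intro i j
  exact congrFun₂ key i j

/-- Lemma 2.3: Let K be a field, α an automorphism of K with fixed field F, and
a₀,…,a_{n-1} elements of K cyclically permuted by α. Let V be the Vandermonde
matrix of the aᵢ (assumed invertible) and C the cyclic permutation matrix.
Then every entry of V⁻¹CV is fixed by α (i.e. lies in F). -/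
theorem stmt0 {K : Type*} [Field K] (α : K ≃+* K) {n : ℕ} (hn : 0 < n)
    (a : Fin n → K) (ha : Function.Injective a)
    (hperm : ∀ i : Fin n, α (a i) = a ⟨((i : ℕ) + 1) % n, Nat.mod_lt _ hn⟩)
    (V C : Matrix (Fin n) (Fin n) K)
    (hV : V = Matrix.of fun (i j : Fin n) => a i ^ (j : ℕ))
    (hVunit : IsUnit V)
    (hC : C = Matrix.of fun (i j : Fin n) => if (i : ℕ) = ((j : ℕ) + 1) % n then (1 : K) else 0) :
    ∀ i j, α ((V⁻¹ * C * V) i j) = (V⁻¹ * C * V) i j :=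
  stmt0_general α hn a hperm V C hV hVunit hC
end

section
/- Let m, n, k be positive integers with k having order n modulo m, let s be a prime with gcd(s,m)=1, and let ζ be a primitive m-th root of unity in the algebraic closure of F_s. If A is the n×n diagonal matrix diag(ζ, ζ^k, …, ζ^{k^{n-1}}) and C is the n×n cyclic shift matrix, and if q is a power of s such that the subgroup generated by q mod m equals the subgroup generated by k mod m, then there exists an invertible n×n matrix V over F̄_s such that both V⁻¹AV and V⁻¹CV have all entries in the subfield F_q. -/
/-!
Let `φ` be the Frobenius `x ↦ x ^ q` and write `q ≡ k ^ t (mod m)`. Then `φ` maps the node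
`ζ ^ k ^ i` to `ζ ^ k ^ (i + t)`, indices mod `n`, so it permutes the nodes by the rotation `σ`.
For the Vandermonde matrix `V` on these nodes, `φ` acts on `V` by permuting its rows by `σ`, and
on `A` and `C` by conjugating with the permutation matrix of `σ` (`C` commutes with every
rotation). These permutations cancel in `V⁻¹ * A * V` and `V⁻¹ * C * V`, which are therefore
fixed by `φ`. The nodes are distinct because `k` has order `n` modulo `m`, so `V` is invertible.
-/

open Matrix

theorem RingHom.map_matrix_inv {n K L : Type*} [Fintype n] [DecidableEq n] [Field K] [Field L]
    (φ : K →+* L) (A : Matrix n n K) : A⁻¹.map φ = (A.map φ)⁻¹ := by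
  have hadj : A.adjugate.map φ = (A.map φ).adjugate := φ.map_adjugate A
  have hdet : φ A.det = (A.map φ).det := φ.map_det A
  rw [inv_def, inv_def, ← hadj, ← hdet, Ring.inverse_eq_inv', Ring.inverse_eq_inv', ← map_inv₀]
  ext i j
  simp

namespace Matrix

theorem map_inv_mul_mul_eq_self_s3 {n K : Type*} [Fintype n] [DecidableEq n] [Field K]
    (φ : K →+* K) (σ : Equiv.Perm n) {V M : Matrix n n K}
    (hV : V.map φ = V.submatrix σ id) (hM : M.map φ = M.submatrix σ σ) :
    (V⁻¹ * M * V).map φ = V⁻¹ * M * V := by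
  rw [Matrix.map_mul, Matrix.map_mul, φ.map_matrix_inv, hV, hM, ← Equiv.coe_refl,
    inv_submatrix_equiv, submatrix_mul_equiv, submatrix_mul_equiv, Equiv.coe_refl, submatrix_id_id]

theorem diagonal_map_eq_submatrix {n R : Type*} [DecidableEq n] [Semiring R] (φ : R →+* R)
    (σ : Equiv.Perm n) {d : n → R} (hd : ∀ i, φ (d i) = d (σ i)) :
    (diagonal d).map φ = (diagonal d).submatrix σ σ := by
  rw [diagonal_map (map_zero φ), submatrix_diagonal_equiv]
  exact congrArg diagonal (funext hd)

theorem vandermonde_map_eq_submatrix {n : ℕ} {R : Type*} [CommRing R] (φ : R →+* R)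
    (σ : Equiv.Perm (Fin n)) {v : Fin n → R} (hv : ∀ i, φ (v i) = v (σ i)) :
    (vandermonde v).map φ = (vandermonde v).submatrix σ id := by
  ext i j
  simp [hv]

def cyclicShift (n : ℕ) [NeZero n] (R : Type*) [Zero R] [One R] : Matrix (Fin n) (Fin n) R :=
  of fun i j => if i = j + 1 then 1 else 0

theorem cyclicShift_map_eq_submatrix_addRight {n : ℕ} [NeZero n] {R : Type*} [Semiring R]
    (φ : R →+* R) (τ : Fin n) :
    (cyclicShift n R).map φ =
      (cyclicShift n R).submatrix (Equiv.addRight τ) (Equiv.addRight τ) := by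
  ext i j
  simp [cyclicShift, apply_ite φ, add_right_comm j τ 1]

end Matrix

theorem Fin.eq_add_one_iff_val_eq {n : ℕ} [NeZero n] (i j : Fin n) :
    i = j + 1 ↔ (i : ℕ) = ((j : ℕ) + 1) % n := by
  rw [Fin.ext_iff, Fin.val_add, Fin.val_one', Nat.add_mod_mod]

namespace IsPrimitiveRoot

variable {M : Type*} [CommMonoid M] {ζ : M} {m n k : ℕ}

theorem pow_eq_pow_iff_natCast_eq (hζ : IsPrimitiveRoot ζ m) (hm : 0 < m) {a b : ℕ} :
    ζ ^ a = ζ ^ b ↔ (a : ZMod m) = b := by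
  rw [ZMod.natCast_eq_natCast_iff', hζ.eq_orderOf]
  exact (isOfFinOrder_iff_pow_eq_one.2 ⟨m, hm, hζ.pow_eq_one⟩).pow_inj_mod

theorem injective_pow_pow (hζ : IsPrimitiveRoot ζ m) (hm : 0 < m)
    (hk : orderOf (k : ZMod m) = n) : Function.Injective fun i : Fin n => ζ ^ k ^ (i : ℕ) := by
  intro i j hij
  rw [hζ.pow_eq_pow_iff_natCast_eq hm] at hij
  push_cast at hij
  exact Fin.ext (pow_injOn_Iio_orderOf (by simp [hk]) (by simp [hk]) hij)

theorem pow_pow_pow_eq_pow_pow_add [NeZero n] (hζ : IsPrimitiveRoot ζ m) (hm : 0 < m)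
    (hk : orderOf (k : ZMod m) = n) {t q : ℕ} (ht : (k : ZMod m) ^ t = q) (i : Fin n) :
    (ζ ^ k ^ (i : ℕ)) ^ q = ζ ^ k ^ ((i + Fin.ofNat n t : Fin n) : ℕ) := by
  rw [← pow_mul, hζ.pow_eq_pow_iff_natCast_eq hm]
  push_cast
  rw [← ht, ← pow_add, Fin.val_add, Fin.val_ofNat, Nat.add_mod_mod]
  exact (hk ▸ pow_mod_orderOf _ _).symm

end IsPrimitiveRoot

theorem stmt3_general (m n k s e q : ℕ) [Fact s.Prime] (hm : 0 < m) (hn : 0 < n)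
    (hk : orderOf ((k : ZMod m)) = n)
    (hq : q = s ^ e)
    (ζ : AlgebraicClosure (ZMod s)) (hζ : IsPrimitiveRoot ζ m)
    (hsub : Submonoid.powers ((q : ZMod m)) = Submonoid.powers ((k : ZMod m)))
    (A C : Matrix (Fin n) (Fin n) (AlgebraicClosure (ZMod s)))
    (hA : A = Matrix.diagonal fun i : Fin n => ζ ^ k ^ (i : ℕ))
    (hC : C = Matrix.of fun (i j : Fin n) =>
      if (i : ℕ) = ((j : ℕ) + 1) % n then (1 : AlgebraicClosure (ZMod s)) else 0) :
    ∃ V : Matrix (Fin n) (Fin n) (AlgebraicClosure (ZMod s)), IsUnit V ∧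
      (∀ i j, ((V⁻¹ * A * V) i j) ^ q = (V⁻¹ * A * V) i j) ∧
      (∀ i j, ((V⁻¹ * C * V) i j) ^ q = (V⁻¹ * C * V) i j) := by
  have : NeZero n := ⟨hn.ne'⟩
  obtain ⟨t, ht⟩ : (q : ZMod m) ∈ Submonoid.powers (k : ZMod m) := hsub ▸ Submonoid.mem_powers _
  set φ := iterateFrobenius (AlgebraicClosure (ZMod s)) s e
  have hφ (x : AlgebraicClosure (ZMod s)) : φ x = x ^ q := by rw [iterateFrobenius_def, hq]
  set σ : Equiv.Perm (Fin n) := Equiv.addRight (Fin.ofNat n t)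
  have hnodes (i : Fin n) : φ (ζ ^ k ^ (i : ℕ)) = ζ ^ k ^ (σ i : ℕ) :=
    (hφ _).trans (hζ.pow_pow_pow_eq_pow_pow_add hm hk ht i)
  set V := vandermonde fun i : Fin n => ζ ^ k ^ (i : ℕ)
  have hfixed (M : Matrix (Fin n) (Fin n) (AlgebraicClosure (ZMod s)))
      (hM : M.map φ = M.submatrix σ σ) (i j : Fin n) :
      ((V⁻¹ * M * V) i j) ^ q = (V⁻¹ * M * V) i j := by
    rw [← hφ]
    exact congrFun₂ (map_inv_mul_mul_eq_self_s3 φ σ (vandermonde_map_eq_submatrix φ σ hnodes) hM) i j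
  have hC' : C = cyclicShift n _ := by simp only [hC, ← Fin.eq_add_one_iff_val_eq, cyclicShift]
  refine ⟨V, (isUnit_iff_isUnit_det V).2 (det_vandermonde_ne_zero_iff.2
    (hζ.injective_pow_pow hm hk)).isUnit, hfixed A ?_, hfixed C ?_⟩
  · exact hA ▸ diagonal_map_eq_submatrix φ σ hnodes
  · exact hC' ▸ cyclicShift_map_eq_submatrix_addRight φ _

/-- Lemma 2.4 / realizability direction of Theorem 2.5: if ⟨q mod m⟩ = ⟨k mod m⟩ in
(ℤ/m)ˣ, then the diagonal matrix diag(ζ,ζ^k,…,ζ^{k^{n-1}}) and the cyclic shift matrix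
can be simultaneously conjugated into matrices with all entries in the subfield F_q of
F̄_s (i.e. entries fixed by x ↦ x^q). -/
theorem stmt3 (m n k s e q : ℕ) [Fact s.Prime] (hm : 0 < m) (hn : 0 < n)
    (hsm : s.Coprime m) (hk : orderOf ((k : ZMod m)) = n)
    (hq : q = s ^ e) (he : 0 < e)
    (ζ : AlgebraicClosure (ZMod s)) (hζ : IsPrimitiveRoot ζ m)
    (hsub : Submonoid.powers ((q : ZMod m)) = Submonoid.powers ((k : ZMod m)))
    (A C : Matrix (Fin n) (Fin n) (AlgebraicClosure (ZMod s)))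
    (hA : A = Matrix.diagonal fun i : Fin n => ζ ^ k ^ (i : ℕ))
    (hC : C = Matrix.of fun (i j : Fin n) =>
      if (i : ℕ) = ((j : ℕ) + 1) % n then (1 : AlgebraicClosure (ZMod s)) else 0) :
    ∃ V : Matrix (Fin n) (Fin n) (AlgebraicClosure (ZMod s)), IsUnit V ∧
      (∀ i j, ((V⁻¹ * A * V) i j) ^ q = (V⁻¹ * A * V) i j) ∧
      (∀ i j, ((V⁻¹ * C * V) i j) ^ q = (V⁻¹ * C * V) i j) :=
  stmt3_general m n k s e q hm hn hk hq ζ hζ hsub A C hA hC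
end

section
/- Let m, n, k be positive integers with k of order n modulo m, s a prime not dividing m, ζ a primitive m-th root of unity in F̄_s, and q a power of s. If there exist matrices A', C' ∈ GLₙ(F_q) with A' conjugate over F̄_s to diag(ζ, ζ^k, …, ζ^{k^{n-1}}), then q ≡ k^i (mod m) for some 0 ≤ i ≤ n-1. -/
/-!
The entries of `A'` are fixed by the Frobenius `x ↦ x ^ q`, so the coefficients of its
characteristic polynomial are too, and Frobenius permutes its roots. Since `A'` is conjugate to
`diag(ζ, ζ^k, …, ζ^{k^{n-1}})`, those roots are the `ζ ^ k ^ i`; hence `ζ ^ q = ζ ^ k ^ i` for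
some `i < n`, and as `ζ` has order `m` this is `q ≡ k ^ i [MOD m]`.
-/

open Polynomial

namespace Matrix

variable {n R : Type*} [Fintype n] [DecidableEq n] [CommRing R]

theorem isRoot_charpoly_apply_of_map_eq {A : Matrix n n R} {φ : R →+* R} (hA : A.map φ = A)
    {x : R} (hx : A.charpoly.IsRoot x) : A.charpoly.IsRoot (φ x) := by
  rw [← hA, charpoly_map, IsRoot, eval_map, eval₂_at_apply, hx.eq_zero, map_zero]

theorem charpoly_inv_mul_mul_of_isUnit {V : Matrix n n R} (hV : IsUnit V) (N : Matrix n n R) :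
    (V⁻¹ * N * V).charpoly = N.charpoly := by
  simpa using charpoly_units_conj' hV.unit N

theorem isRoot_charpoly_diagonal_iff [IsDomain R] {d : n → R} {x : R} :
    (diagonal d).charpoly.IsRoot x ↔ ∃ i, d i = x := by
  simp only [charpoly_diagonal, IsRoot.def, eval_prod, eval_sub, eval_X, eval_C,
    Finset.prod_eq_zero_iff, Finset.mem_univ, true_and, sub_eq_zero]
  exact exists_congr fun _ => eq_comm

theorem exists_eq_apply_of_inv_mul_diagonal_mul_eq [IsDomain R] {d : n → R} {V A : Matrix n n R}
    (hV : IsUnit V) (hconj : V⁻¹ * diagonal d * V = A) {φ : R →+* R} (hA : A.map φ = A)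
    (i : n) : ∃ j, d j = φ (d i) := by
  have hchar : A.charpoly = (diagonal d).charpoly := hconj ▸ charpoly_inv_mul_mul_of_isUnit hV _
  rw [← isRoot_charpoly_diagonal_iff, ← hchar]
  exact isRoot_charpoly_apply_of_map_eq hA (hchar ▸ isRoot_charpoly_diagonal_iff.mpr ⟨i, rfl⟩)

end Matrix

theorem stmt4_general (m n k s e q : ℕ) [Fact s.Prime] (hm : 0 < m) (hn : 0 < n)
    (hq : q = s ^ e)
    (ζ : AlgebraicClosure (ZMod s)) (hζ : IsPrimitiveRoot ζ m)
    (h : ∃ A' C' : Matrix (Fin n) (Fin n) (AlgebraicClosure (ZMod s)),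
      IsUnit A' ∧ IsUnit C' ∧
      (∀ i j, (A' i j) ^ q = A' i j) ∧ (∀ i j, (C' i j) ^ q = C' i j) ∧
      ∃ V : Matrix (Fin n) (Fin n) (AlgebraicClosure (ZMod s)), IsUnit V ∧
        V⁻¹ * (Matrix.diagonal fun i : Fin n => ζ ^ k ^ (i : ℕ)) * V = A') :
    ∃ i < n, q ≡ k ^ i [MOD m] := by
  obtain ⟨A', -, -, -, hAq, -, V, hV, hconj⟩ := h
  have hA : A'.map (iterateFrobenius _ s e) = A' := by
    ext i j
    rw [Matrix.map_apply, iterateFrobenius_def, ← hq, hAq]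
  obtain ⟨j, hj⟩ := Matrix.exists_eq_apply_of_inv_mul_diagonal_mul_eq hV hconj hA ⟨0, hn⟩
  rw [iterateFrobenius_def, ← hq, Fin.val_mk, pow_zero, pow_one] at hj
  refine ⟨j, j.isLt, ?_⟩
  have hζfin : IsOfFinOrder ζ := orderOf_pos_iff.mp (hζ.eq_orderOf ▸ hm)
  rwa [hζ.eq_orderOf, ← hζfin.pow_eq_pow_iff_modEq, eq_comm]

/-- Necessity direction of Theorem 2.5: if the pair of matrices of the induced
representation is realizable over F_q — in particular if there are invertible matrices
A', C' with entries in F_q (entries fixed by x ↦ x^q) with A' conjugate over F̄_s to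
diag(ζ, ζ^k, …, ζ^{k^{n-1}}) — then q ≡ k^i (mod m) for some 0 ≤ i ≤ n-1. -/
theorem stmt4 (m n k s e q : ℕ) [Fact s.Prime] (hm : 0 < m) (hn : 0 < n)
    (hsm : s.Coprime m) (hk : orderOf ((k : ZMod m)) = n)
    (hq : q = s ^ e) (he : 0 < e)
    (ζ : AlgebraicClosure (ZMod s)) (hζ : IsPrimitiveRoot ζ m)
    (h : ∃ A' C' : Matrix (Fin n) (Fin n) (AlgebraicClosure (ZMod s)),
      IsUnit A' ∧ IsUnit C' ∧
      (∀ i j, (A' i j) ^ q = A' i j) ∧ (∀ i j, (C' i j) ^ q = C' i j) ∧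
      ∃ V : Matrix (Fin n) (Fin n) (AlgebraicClosure (ZMod s)), IsUnit V ∧
        V⁻¹ * (Matrix.diagonal fun i : Fin n => ζ ^ k ^ (i : ℕ)) * V = A') :
    ∃ i < n, q ≡ k ^ i [MOD m] :=
  stmt4_general m n k s e q hm hn hq ζ hζ h
end

section
/- Let p and s be distinct odd primes, ζ a primitive p-th root of unity in F̄_s, and Q the set of nonzero quadratic residues mod p. Then the Frobenius x ↦ x^s fixes the element Σ_{x∈Q} ζ^x if and only if s ∈ Q, i.e., s is a quadratic residue mod p. -/
/-!
Let `χ` be the quadratic character of `𝔽_p`, viewed with values in `F̄_s`, and `ψ = ζ ^ ·` the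
additive character. Since `1 + χ` is twice the indicator of `Q` plus the indicator of `0`, and
`∑ ψ = 0`, the Gauss sum `g = ∑ χ(a) ψ(a)` equals `2c + 1`. Frobenius multiplies `g` by `χ(s)`,
and `g ≠ 0`; as `2 ≠ 0` in characteristic `s`, `c ^ s = c ↔ g ^ s = g ↔ χ(s) = 1`.
-/

open Finset

lemma Units.isSquare_val_iff {M : Type*} [CommMonoid M] (u : Mˣ) :
    IsSquare (u : M) ↔ IsSquare u := by
  refine ⟨fun ⟨r, hr⟩ => ?_, fun ⟨v, hv⟩ => ⟨v, by rw [hv, Units.val_mul]⟩⟩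
  obtain ⟨v, rfl⟩ := (IsUnit.mul_iff.mp (hr ▸ u.isUnit)).1
  exact ⟨v, Units.ext hr⟩

lemma Fintype.sum_eq_add_sum_units {G₀ M : Type*} [GroupWithZero G₀] [Fintype G₀]
    [DecidableEq G₀] [AddCommMonoid M] (f : G₀ → M) : ∑ a, f a = f 0 + ∑ u : G₀ˣ, f u := by
  rw [Fintype.sum_eq_add_sum_subtype_ne f 0, ← unitsEquivNeZero.sum_comp]
  rfl

lemma mul_add_pow_char_eq_self_iff {F : Type*} [Field F] (s : ℕ) [Fact s.Prime] [CharP F s]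
    {n : ℕ} (hn : (n : F) ≠ 0) (m : ℕ) (c : F) :
    (n * c + m) ^ s = n * c + m ↔ c ^ s = c := by
  have hfix (k : ℕ) : (k : F) ^ s = k := by rw [← frobenius_def, map_natCast]
  rw [add_pow_char, mul_pow, hfix, hfix, add_left_inj, mul_right_inj' hn]

section QuadraticGaussSum

variable {K F : Type*} [Field K] [Fintype K] [DecidableEq K] [Field F]

lemma quadraticChar_cast_eq_one_iff (hF : ringChar F ≠ 2) {a : K} (ha : a ≠ 0) :
    ((quadraticChar K a : ℤ) : F) = 1 ↔ IsSquare a := by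
  rw [← quadraticChar_one_iff_isSquare ha]
  rcases quadraticChar_dichotomy ha with h | h <;> rw [h]
  · simp
  · simpa using Ring.neg_one_ne_one_of_char_ne_two hF

lemma one_add_quadraticChar_units (u : Kˣ) :
    1 + ((quadraticChar K u : ℤ) : F) = if IsSquare u then 2 else 0 := by
  simp only [quadraticChar_apply, quadraticCharFun, if_neg u.ne_zero, Units.isSquare_val_iff]
  split_ifs <;> norm_num

theorem gaussSum_quadraticChar_eq [DecidablePred (IsSquare : Kˣ → Prop)] {ψ : AddChar K F}
    (hψ : ψ ≠ 1) :
    gaussSum ((quadraticChar K).ringHomComp (algebraMap ℤ F)) ψ =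
      2 * ∑ u ∈ univ.filter (IsSquare : Kˣ → Prop), ψ u + 1 := by
  calc gaussSum ((quadraticChar K).ringHomComp (algebraMap ℤ F)) ψ
      = ∑ a, (1 + ((quadraticChar K a : ℤ) : F)) * ψ a := by
        simp [gaussSum, add_mul, sum_add_distrib, AddChar.sum_eq_zero_of_ne_one hψ]
    _ = 1 + ∑ u : Kˣ, if IsSquare u then 2 * ψ u else 0 := by
        simp only [Fintype.sum_eq_add_sum_units, one_add_quadraticChar_units, ite_mul, zero_mul]
        simp
    _ = 2 * ∑ u ∈ univ.filter (IsSquare : Kˣ → Prop), ψ u + 1 := by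
        rw [sum_ite, sum_const_zero, mul_sum]
        ring

end QuadraticGaussSum

section FrobeniusOnQuadraticPeriod

variable {K F : Type*} [Field K] [Fintype K] [Field F] (s : ℕ) [Fact s.Prime] [CharP F s]

lemma natCast_ne_zero_of_ringChar_ne (hKs : ringChar K ≠ s) : (s : K) ≠ 0 := by
  rw [Ne, ringChar.spec, Nat.prime_dvd_prime_iff_eq (CharP.char_is_prime K _) Fact.out]
  exact hKs

lemma natCast_card_ne_zero_of_ringChar_ne (hKs : ringChar K ≠ s) :
    (Fintype.card K : F) ≠ 0 := by
  obtain ⟨n, hq, hcard⟩ := FiniteField.card K (ringChar K)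
  rw [hcard, Ne, CharP.cast_eq_zero_iff F s]
  intro hdvd
  exact hKs ((Nat.prime_dvd_prime_iff_eq Fact.out hq).mp
    ((Fact.out : s.Prime).dvd_of_dvd_pow hdvd)).symm

theorem pow_char_sum_isSquare_eq_self_iff [DecidableEq K]
    [DecidablePred (IsSquare : Kˣ → Prop)] (hK : ringChar K ≠ 2) (hs : s ≠ 2)
    (hKs : ringChar K ≠ s) {ψ : AddChar K F} (hψ : ψ.IsPrimitive) :
    (∑ u ∈ univ.filter (IsSquare : Kˣ → Prop), ψ u) ^ s =
        ∑ u ∈ univ.filter (IsSquare : Kˣ → Prop), ψ u ↔ IsSquare (s : K) := by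
  set χ := (quadraticChar K).ringHomComp (algebraMap ℤ F)
  have hF : ringChar F ≠ 2 := ringChar.eq F s ▸ hs
  have hsK := natCast_ne_zero_of_ringChar_ne s hKs
  have hχ : χ ≠ 1 := by
    obtain ⟨a, ha⟩ := quadraticChar_exists_neg_one' hK
    refine MulChar.ne_one_iff.mpr ⟨a, ?_⟩
    simpa [χ, ha] using Ring.neg_one_ne_one_of_char_ne_two hF
  have hg0 : gaussSum χ ψ ≠ 0 :=
    gaussSum_ne_zero_of_nontrivial (natCast_card_ne_zero_of_ringChar_ne s hKs) hχ hψ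
  have hfrob : gaussSum χ ψ ^ s = χ s * gaussSum χ ψ :=
    ((quadraticChar_isQuadratic K).comp _).gaussSum_frob s hsK.isUnit ψ
  have hψ1 : ψ ≠ 1 := by simpa using hψ one_ne_zero
  rw [← mul_add_pow_char_eq_self_iff s (n := 2) (by exact_mod_cast Ring.two_ne_zero hF) 1,
    Nat.cast_ofNat, Nat.cast_one, ← gaussSum_quadraticChar_eq hψ1, hfrob, mul_eq_right₀ hg0]
  exact quadraticChar_cast_eq_one_iff hF hsK

end FrobeniusOnQuadraticPeriod

open Classical in
/-- The Frobenius x ↦ x^s fixes the Gauss sum c = Σ_{x∈Q} ζ^x (Q the nonzero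
quadratic residues mod p) iff s is a quadratic residue mod p. -/
theorem stmt10 (p s : ℕ) [Fact p.Prime] [Fact s.Prime] (hp : Odd p) (hs : Odd s)
    (hps : p ≠ s)
    (ζ : AlgebraicClosure (ZMod s)) (hζ : IsPrimitiveRoot ζ p)
    (c : AlgebraicClosure (ZMod s))
    (hc : c = ∑ x ∈ Finset.univ.filter (fun x : (ZMod p)ˣ => IsSquare x),
      ζ ^ ((x : ZMod p)).val) :
    c ^ s = c ↔ IsSquare ((s : ZMod p)) := by
  have : NeZero p := ⟨(Fact.out : p.Prime).ne_zero⟩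
  subst hc
  refine pow_char_sum_isSquare_eq_self_iff s ?_ (hs.ne_two_of_dvd_nat dvd_rfl) ?_
    (AddChar.zmodChar_primitive_of_primitive_root p hζ)
  all_goals rw [ZMod.ringChar_zmod_n]
  exacts [hp.ne_two_of_dvd_nat dvd_rfl, hps]
end

section
/- Under the hypotheses of the previous lemma (f monic with distinct roots permuted by x ↦ x^d), if g, h ∈ F[x] satisfy g ≡ h (mod f), then g(x^d) ≡ h(x^d) (mod f). -/
/-! A separable polynomial that splits is the product of the distinct `X - a` over its roots, so it
divides every polynomial vanishing at its roots. The hypothesis says that `f(x^d)` vanishes at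
every root of `f`, hence `f ∣ f(x^d)`, and then `f ∣ g - h` gives `f(x^d) ∣ g(x^d) - h(x^d)`. -/

namespace Polynomial

theorem Splits.dvd_of_separable_of_isRoot {K : Type*} [Field K] {p q : K[X]} (hsplit : p.Splits)
    (hsep : p.Separable) (hroot : ∀ a, p.IsRoot a → q.IsRoot a) : p ∣ q := by
  rcases eq_or_ne q 0 with rfl | hq
  · exact dvd_zero p
  refine hsplit.dvd_of_roots_le_roots hsep.ne_zero ?_
  rw [Multiset.le_iff_subset (nodup_roots hsep)]
  intro a ha
  exact (mem_roots hq).2 (hroot a (isRoot_of_mem_roots ha))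

theorem dvd_comp_X_pow_of_pow_root {F K : Type*} [Field F] [Field K] [Algebra F K] {f : F[X]}
    (hsplit : (f.map (algebraMap F K)).Splits) (hsep : f.Separable) {d : ℕ}
    (hroot : ∀ x : K, aeval x f = 0 → aeval (x ^ d) f = 0) : f ∣ f.comp (X ^ d) := by
  rw [← map_dvd_map' (algebraMap F K), map_comp, Polynomial.map_pow, map_X]
  refine hsplit.dvd_of_separable_of_isRoot hsep.map fun x hx => ?_
  rw [IsRoot, eval_map_algebraMap] at hx
  simpa [IsRoot, eval_map_algebraMap] using hroot x hx

theorem dvd_sub_comp_of_dvd_comp {R : Type*} [CommRing R] {f g h p : R[X]} (hf : f ∣ f.comp p)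
    (hgh : f ∣ g - h) : f ∣ g.comp p - h.comp p := by
  rw [← sub_comp]
  exact hf.trans (_root_.map_dvd (compRingHom p) hgh)

end Polynomial

theorem stmt15_general {F K : Type*} [Field F] [Field K] [Algebra F K]
    (f : Polynomial F)
    (hsplit : (f.map (algebraMap F K)).Splits) (hsep : f.Separable)
    (d : ℕ)
    (hroots : (fun x : K => x ^ d) '' {x : K | Polynomial.aeval x f = 0}
      = {x : K | Polynomial.aeval x f = 0})
    (g h : Polynomial F) (hgh : f ∣ g - h) :
    f ∣ g.comp (Polynomial.X ^ d) - h.comp (Polynomial.X ^ d) := by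
  have hpow : ∀ x : K, Polynomial.aeval x f = 0 → Polynomial.aeval (x ^ d) f = 0 := fun x hx =>
    show x ^ d ∈ {x : K | Polynomial.aeval x f = 0} from hroots ▸ ⟨x, hx, rfl⟩
  exact Polynomial.dvd_sub_comp_of_dvd_comp
    (Polynomial.dvd_comp_X_pow_of_pow_root hsplit hsep hpow) hgh

/-- Corollary 4.3: with f monic with distinct roots permuted by x ↦ x^d, if
g ≡ h (mod f) then g(x^d) ≡ h(x^d) (mod f). -/
theorem stmt15 {F K : Type*} [Field F] [Field K] [Algebra F K]
    (f : Polynomial F) (hf : f.Monic)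
    (hsplit : (f.map (algebraMap F K)).Splits) (hsep : f.Separable)
    (d : ℕ) (hd : 0 < d)
    (hroots : (fun x : K => x ^ d) '' {x : K | Polynomial.aeval x f = 0}
      = {x : K | Polynomial.aeval x f = 0})
    (g h : Polynomial F) (hgh : f ∣ g - h) :
    f ∣ g.comp (Polynomial.X ^ d) - h.comp (Polynomial.X ^ d) :=
  stmt15_general f hsplit hsep d hroots g h hgh
end

section
/- Let s be a prime, m coprime to s, q a power of s, k an integer of order t modulo m with q ≡ k^j (mod m) for some j, ζ a primitive m-th root of unity in F̄_s, and f = ∏_{i=0}^{t−1}(x − ζ^{k^i}) ∈ F_q[x]. Then for every η ∈ F_qˣ there exists z(x) ∈ F_q[x] such that z(x)·z(x^k)·z(x^{k²})⋯z(x^{k^{t−1}}) ≡ η (mod f). -/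
/-!
The roots `ζ ^ k ^ i` of `f` are distinct and `x ↦ x ^ k` permutes them cyclically, so `f`
divides `∏ i, z (x ^ k ^ i) - η` as soon as the product of the values of `z` at all roots of `f`
is `η`. Write `f = p * h` with `p` the minimal polynomial of `ζ`; separability makes `p` and `h`
coprime, and by the Chinese remainder theorem we may take `z ≡ g (mod p)` and `z ≡ 1 (mod h)`
for any `g`. The roots of `p` are the Frobenius conjugates `ζ ^ q ^ c`, so the product becomes
the norm of `g(ζ)` from `K(ζ)` to `K`, and `g` can be chosen to make it `η` because the norm of
an extension of finite fields is surjective.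
-/

open Polynomial IntermediateField Finset

theorem Function.Periodic.prod_range_add {M : Type*} [CommMonoid M] {v : ℕ → M} {t : ℕ}
    (hv : Function.Periodic v t) (c : ℕ) :
    ∏ i ∈ range t, v (c + i) = ∏ i ∈ range t, v i := by
  induction c with
  | zero => simp
  | succ c ih =>
    rw [← ih]
    cases t with
    | zero => simp
    | succ s =>
      rw [prod_range_succ, prod_range_succ', add_zero, add_assoc c 1 s, add_comm 1 s, hv c]
      exact congrArg (· * v c) (prod_congr rfl fun i _ => congrArg v (by omega))

theorem IsCoprime.exists_dvd_sub_and_dvd_sub {R : Type*} [CommRing R] {p q : R}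
    (h : IsCoprime p q) (a b : R) : ∃ z, p ∣ z - a ∧ q ∣ z - b := by
  obtain ⟨u, v, huv⟩ := h
  exact ⟨a * (v * q) + b * (u * p), ⟨(b - a) * u, by linear_combination a * huv⟩,
    ⟨(a - b) * v, by linear_combination b * huv⟩⟩

section SplitsWithDistinctRoots

variable {K L ι : Type*} [Field K] [Field L] [Algebra K L] {s : Finset ι} {α : ι → L}
  {f : K[X]}

theorem Polynomial.aroots_eq_of_map_eq_prod_X_sub_C
    (hf : f.map (algebraMap K L) = ∏ i ∈ s, (X - C (α i))) :
    f.aroots L = s.val.map α := by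
  rw [aroots_def, hf, ← roots_multiset_prod_X_sub_C (s.val.map α), Multiset.map_map]
  rfl

theorem Polynomial.dvd_of_map_eq_prod_X_sub_C (hα : Set.InjOn α s)
    (hf : f.map (algebraMap K L) = ∏ i ∈ s, (X - C (α i))) {P : K[X]}
    (hP : ∀ i ∈ s, aeval (α i) P = 0) : f ∣ P := by
  have hmonic : (f.map (algebraMap K L)).Monic :=
    hf ▸ monic_prod_of_monic _ _ fun i _ => monic_X_sub_C _
  rw [← map_dvd_map _ (algebraMap K L).injective
    (monic_of_injective (algebraMap K L).injective hmonic), hf]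
  refine prod_dvd_of_coprime (fun i hi j hj hij => ?_) fun i hi => ?_
  · exact isCoprime_X_sub_C_of_isUnit_sub (sub_ne_zero.mpr (hα.ne hi hj hij)).isUnit
  · rw [dvd_iff_isRoot, IsRoot, ← eval₂_eq_eval_map, ← aeval_def, hP i hi]

end SplitsWithDistinctRoots

theorem IsPrimitiveRoot.pow_pow_eq_pow_pow_iff_modEq {M : Type*} [CommMonoid M] {ζ : M}
    {m : ℕ} (hζ : IsPrimitiveRoot ζ m) (hm : 0 < m) {k : ℕ} (hk : 0 < orderOf (k : ZMod m))
    {a b : ℕ} :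
    ζ ^ k ^ a = ζ ^ k ^ b ↔ a ≡ b [MOD orderOf (k : ZMod m)] := by
  rw [(orderOf_pos_iff.mp (hζ.eq_orderOf ▸ hm)).pow_eq_pow_iff_modEq, ← hζ.eq_orderOf,
    ← ZMod.natCast_eq_natCast_iff, Nat.cast_pow, Nat.cast_pow,
    (orderOf_pos_iff.mp hk).pow_eq_pow_iff_modEq]

namespace FiniteField

variable {K L : Type*} [Field K] [Fintype K] [Field L] [Algebra K L] {x : L}

theorem pow_card_pow_eq_pow_card_pow_iff_modEq (hx : IsIntegral K x) {a b : ℕ} :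
    x ^ Fintype.card K ^ a = x ^ Fintype.card K ^ b ↔
      a ≡ b [MOD (minpoly K x).natDegree] := by
  have := adjoin.finiteDimensional hx
  have : Finite K⟮x⟯ := Module.finite_of_finite K
  have hord := orderOf_frobeniusAlgHom K K⟮x⟯
  rw [← adjoin.finrank hx, ← hord,
    ← (orderOf_pos_iff.mp (hord ▸ Module.finrank_pos)).pow_eq_pow_iff_modEq]
  have hfrob (n : ℕ) (y : K⟮x⟯) :
      (frobeniusAlgHom K K⟮x⟯ ^ n) y = y ^ Fintype.card K ^ n := by
    rw [AlgHom.coe_pow, coe_frobeniusAlgHom, pow_iterate]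
  constructor
  · intro h
    refine adjoin_algHom_ext K fun y hy => ?_
    rw [Set.mem_singleton_iff] at hy
    subst hy
    rw [hfrob, hfrob]
    exact Subtype.ext (by simpa using h)
  · intro h
    simpa [hfrob] using congr_arg Subtype.val (DFunLike.congr_fun h (AdjoinSimple.gen K x))

theorem aroots_minpoly (hx : IsIntegral K x) :
    (minpoly K x).aroots L =
      (range (minpoly K x).natDegree).val.map (fun c => x ^ Fintype.card K ^ c) := by
  symm
  refine Multiset.eq_of_le_of_card_le ?_ ?_
  · refine (Multiset.le_iff_subset ?_).mpr fun y hy => ?_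
    · refine (range _).nodup.map_on fun a ha b hb hab => ?_
      exact ((pow_card_pow_eq_pow_card_pow_iff_modEq hx).mp hab).eq_of_lt_of_lt
        (mem_range.mp ha) (mem_range.mp hb)
    obtain ⟨c, -, rfl⟩ := Multiset.mem_map.mp hy
    rw [mem_aroots]
    refine ⟨minpoly.ne_zero hx, ?_⟩
    have := aeval_algHom_apply (frobeniusAlgHom K L ^ c) x (minpoly K x)
    rw [minpoly.aeval, map_zero, AlgHom.coe_pow, coe_frobeniusAlgHom, pow_iterate] at this
    exact this
  · simpa using card_roots' ((minpoly K x).map (algebraMap K L))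

theorem algebraMap_norm_aeval_gen (hx : IsIntegral K x) (g : K[X]) :
    algebraMap K L (Algebra.norm K (aeval (AdjoinSimple.gen K x) g)) =
      (((minpoly K x).aroots L).map (fun y => aeval y g)).prod := by
  have := adjoin.finiteDimensional hx
  have : Finite K⟮x⟯ := Module.finite_of_finite K
  have h := congr_arg (algebraMap K⟮x⟯ L)
    (algebraMap_norm_eq_prod_pow K K⟮x⟯ (aeval (AdjoinSimple.gen K x) g))
  rw [← IsScalarTower.algebraMap_apply, adjoin.finrank hx, Nat.card_eq_fintype_card] at h
  rw [h, aroots_minpoly hx, Multiset.map_map, ← prod_eq_multiset_prod, map_prod]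
  refine prod_congr rfl fun c _ => ?_
  have := aeval_algHom_apply (frobeniusAlgHom K L ^ c) x g
  rw [AlgHom.coe_pow, coe_frobeniusAlgHom, pow_iterate] at this
  simp [this]

theorem exists_prod_aroots_aeval_eq {f : K[X]} (hf : f.Separable) (hx : aeval x f = 0) (η : K) :
    ∃ z : K[X], ((f.aroots L).map (fun y => aeval y z)).prod = algebraMap K L η := by
  have hxi : IsIntegral K x := IsAlgebraic.isIntegral ⟨f, hf.ne_zero, hx⟩
  have hirr := minpoly.irreducible hxi
  obtain ⟨h, hfh⟩ := minpoly.dvd K x hx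
  have hcop : IsCoprime (minpoly K x) h := hirr.coprime_iff_not_dvd.mpr fun hdvd =>
    hirr.not_isUnit (hf.squarefree _ (hfh ▸ mul_dvd_mul_left _ hdvd))
  have := adjoin.finiteDimensional hxi
  have : Finite K⟮x⟯ := Module.finite_of_finite K
  obtain ⟨β, rfl⟩ := norm_surjective K K⟮x⟯ η
  obtain ⟨g, rfl⟩ := (adjoin.powerBasis hxi).exists_eq_aeval' β
  obtain ⟨z, hzg, hz1⟩ := hcop.exists_dvd_sub_and_dvd_sub g 1
  have eval_eq {p a b : K[X]} (hp : p ∣ a - b) {y : L} (hy : y ∈ p.aroots L) :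
      aeval y a = aeval y b := by
    rw [← sub_eq_zero, ← map_sub]
    exact aeval_eq_zero_of_dvd_aeval_eq_zero hp (mem_aroots.mp hy).2
  refine ⟨z, ?_⟩
  rw [adjoin.powerBasis_gen, algebraMap_norm_aeval_gen hxi, hfh, aroots_mul (hfh ▸ hf.ne_zero),
    Multiset.map_add, Multiset.prod_add, Multiset.map_congr rfl fun y hy => eval_eq hzg hy,
    Multiset.map_congr rfl fun y hy => eval_eq hz1 hy]
  simp

end FiniteField

open Polynomial in
theorem stmt16_general {K L : Type*} [Field K] [Fintype K] [Field L] [Algebra K L]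
    (m k t : ℕ) (hm : 0 < m)
    (hkt : orderOf ((k : ZMod m)) = t)
    (ζ : L) (hζ : IsPrimitiveRoot ζ m)
    (f : Polynomial K)
    (hf : f.map (algebraMap K L) = ∏ i ∈ Finset.range t, (X - C (ζ ^ k ^ i)))
    (η : K) :
    ∃ z : Polynomial K,
      f ∣ (∏ i ∈ Finset.range t, z.comp (X ^ k ^ i)) - C η := by
  rcases t.eq_zero_or_pos with rfl | ht
  · rw [prod_range_zero, ← Polynomial.map_one (algebraMap K L)] at hf
    exact ⟨0, map_injective _ (algebraMap K L).injective hf ▸ one_dvd _⟩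
  have hpow_inj {a b : ℕ} : ζ ^ k ^ a = ζ ^ k ^ b ↔ a ≡ b [MOD t] :=
    hkt ▸ hζ.pow_pow_eq_pow_pow_iff_modEq hm (hkt ▸ ht)
  have hinj : Set.InjOn (fun i => ζ ^ k ^ i) (range t) :=
    fun a ha b hb h => (hpow_inj.mp h).eq_of_lt_of_lt (mem_range.mp ha) (mem_range.mp hb)
  have hsep : f.Separable := by
    rw [← separable_map (algebraMap K L), hf]
    exact separable_prod_X_sub_C_iff'.mpr hinj
  have hroot : aeval ζ f = 0 := by
    rw [aeval_def, eval₂_eq_eval_map, hf, eval_prod]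
    exact prod_eq_zero (mem_range.mpr ht) (by simp)
  obtain ⟨z, hz⟩ := FiniteField.exists_prod_aroots_aeval_eq hsep hroot η
  have hperiodic : Function.Periodic (fun a => aeval (ζ ^ k ^ a) z) t :=
    fun a => congrArg (fun y => aeval y z) (hpow_inj.mpr Nat.add_modEq_right)
  refine ⟨z, dvd_of_map_eq_prod_X_sub_C hinj hf fun i _ => ?_⟩
  calc aeval (ζ ^ k ^ i) ((∏ i' ∈ range t, z.comp (X ^ k ^ i')) - C η)
      = ∏ i' ∈ range t, aeval (ζ ^ k ^ (i + i')) z - algebraMap K L η := by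
        simp [aeval_comp, pow_add, pow_mul]
    _ = 0 := by
        rw [hperiodic.prod_range_add, ← hz, aroots_eq_of_map_eq_prod_X_sub_C hf, Multiset.map_map,
          sub_eq_zero]
        rfl

open Polynomial in
/-- Lemma 4.4: let K be a finite field of characteristic s with q = |K| elements,
gcd(s,m)=1, k of order t mod m with q ≡ k^j (mod m) for some j, ζ a primitive m-th
root of unity in an extension L of K, and f ∈ K[x] the polynomial whose roots are
ζ, ζ^k, …, ζ^{k^{t-1}}. Then for every nonzero η ∈ K there exists z(x) ∈ K[x] with
z(x)·z(x^k)⋯z(x^{k^{t−1}}) ≡ η (mod f). -/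
theorem stmt16 {K L : Type*} [Field K] [Fintype K] [Field L] [Algebra K L]
    (s m k t q j : ℕ) (hs : s.Prime) (hchar : ringChar K = s)
    (hq : q = Fintype.card K) (hsm : s.Coprime m) (hm : 0 < m)
    (hkt : orderOf ((k : ZMod m)) = t) (hqk : ((q : ZMod m)) = ((k : ZMod m)) ^ j)
    (ζ : L) (hζ : IsPrimitiveRoot ζ m)
    (f : Polynomial K)
    (hf : f.map (algebraMap K L) = ∏ i ∈ Finset.range t, (X - C (ζ ^ k ^ i)))
    (η : K) (hη : η ≠ 0) :
    ∃ z : Polynomial K,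
      f ∣ (∏ i ∈ Finset.range t, z.comp (X ^ k ^ i)) - C η :=
  stmt16_general m k t hm hkt ζ hζ f hf η
end

section
/- Let m be odd, m ≥ 3, and let Q_{4m} = ⟨a,b | a^m = 1, b⁴ = 1, b⁻¹ab = a⁻¹⟩ (with the additional relation making b² central of order 2 realized in the 2-dimensional representations). Let F_q be a finite field of odd characteristic coprime to m and suppose θ = ζ + ζ⁻¹ ∈ F_q, where ζ is a primitive m-th root of unity in F̄_q, and suppose α, β ∈ F_q satisfy α² + β² = θ² − 4 with β ≠ 0. Set à = (θ/2)I + (1/2)[[α, β],[β, −α]] and B = [[0,−1],[1,0]]. Then Ã^m = I, B⁴ = I, B⁻¹ÃB = Ã⁻¹, and the minimal polynomial of à is x² − θx + 1. -/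
/-!
Since `A² = (α² + β²) I = (θ² − 4) I`, the matrix `Ã` satisfies `Ã² = θ Ã − I`, i.e. it is a root
of `p = X² − θ X + 1`. Over `L`, `p = (X − ζ)(X − ζ⁻¹)` has distinct roots which are `m`-th roots of
unity, so `p ∣ X^m − 1` and `Ã^m = I`. The off-diagonal entry `β / 2 ≠ 0` shows that `Ã` is not
scalar, so its minimal polynomial has degree `2` and is `p`. Finally `B` anticommutes with `A`, so
`B⁻¹ Ã B = θ I − Ã`, which is `Ã⁻¹` by the quadratic relation.
-/

open Polynomial

theorem two_ne_zero_of_odd_card {K : Type*} [Field K] [Fintype K]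
    (h : Odd (Fintype.card K)) : (2 : K) ≠ 0 := by
  intro h2
  obtain ⟨k, hk⟩ := h
  have hcast : ((Fintype.card K : ℕ) : K) = 0 := FiniteField.cast_card_eq_zero K
  rw [hk] at hcast
  push_cast at hcast
  simp [h2] at hcast

theorem IsPrimitiveRoot.ne_inv {L : Type*} [Field L] {ζ : L} {m : ℕ} (hζ : IsPrimitiveRoot ζ m)
    (hm : 3 ≤ m) : ζ ≠ ζ⁻¹ := by
  intro h
  have hsq : ζ ^ 2 = 1 := by
    rw [sq]; nth_rewrite 2 [h]; exact mul_inv_cancel₀ (hζ.ne_zero (by omega))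
  have := Nat.le_of_dvd two_pos (hζ.dvd_of_pow_eq_one 2 hsq)
  omega

section QuadraticRelation

variable {K R : Type*} [Field K] [Ring R] [Algebra K R]

theorem sq_eq_smul_sub_one_of_sq_eq {θ : K} (h2 : (2 : K) ≠ 0) {A : R}
    (hA : A ^ 2 = (θ ^ 2 - 4) • 1) :
    ((2⁻¹ * θ) • 1 + (2 : K)⁻¹ • A) ^ 2 = θ • ((2⁻¹ * θ) • 1 + (2 : K)⁻¹ • A) - 1 := by
  simp only [sq, add_mul, mul_add, smul_mul_smul, one_mul, mul_one] at hA ⊢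
  rw [hA]
  match_scalars <;> field_simp <;> ring

theorem aeval_X_sq_sub_C_mul_X_add_one {θ : K} {a : R} (ha : a ^ 2 = θ • a - 1) :
    aeval a (X ^ 2 - C θ * X + 1 : K[X]) = 0 := by
  simp [ha, Algebra.smul_def]

theorem minpoly_eq_of_natDegree_eq_two [Nontrivial R] {a : R} {p : K[X]} (hp : p.Monic)
    (hdeg : p.natDegree = 2) (hpa : aeval a p = 0) (ha : a ∉ (algebraMap K R).range) :
    minpoly K a = p := by
  have hint : IsIntegral K a := ⟨p, hp, hpa⟩
  refine (eq_of_monic_of_dvd_of_natDegree_le (minpoly.monic hint) hp (minpoly.dvd K a hpa) ?_).symm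
  rw [hdeg]
  exact (minpoly.two_le_natDegree_iff hint).mpr ha

end QuadraticRelation

section RootsOfUnity

variable {K L : Type*} [Field K] [Field L] [Algebra K L]

theorem map_X_sq_sub_C_mul_X_add_one {θ : K} {ζ : L} (hζ : ζ ≠ 0)
    (hθ : algebraMap K L θ = ζ + ζ⁻¹) :
    (X ^ 2 - C θ * X + 1 : K[X]).map (algebraMap K L) = (X - C ζ) * (X - C ζ⁻¹) := by
  have hmul : C ζ * C ζ⁻¹ = (1 : L[X]) := by rw [← C_mul, mul_inv_cancel₀ hζ, C_1]
  simp only [Polynomial.map_add, Polynomial.map_sub, Polynomial.map_mul, Polynomial.map_pow,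
    map_X, map_C, Polynomial.map_one, hθ, C_add]
  linear_combination -hmul

theorem X_sq_sub_C_mul_X_add_one_dvd_X_pow_sub_one {θ : K} {ζ : L} {m : ℕ}
    (hθ : algebraMap K L θ = ζ + ζ⁻¹) (hζm : ζ ^ m = 1) (hζ : ζ ≠ ζ⁻¹) :
    (X ^ 2 - C θ * X + 1 : K[X]) ∣ X ^ m - 1 := by
  have hζ0 : ζ ≠ 0 := fun h => hζ (by simp [h])
  rw [← map_dvd_map' (algebraMap K L), map_X_sq_sub_C_mul_X_add_one hζ0 hθ]
  have hcop : IsCoprime (X - C ζ : L[X]) (X - C ζ⁻¹) :=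
    isCoprime_X_sub_C_of_isUnit_sub (sub_ne_zero.mpr hζ).isUnit
  simpa using hcop.mul_dvd (dvd_iff_isRoot.mpr (by simp [hζm]))
    (dvd_iff_isRoot.mpr (by simp [inv_pow, hζm]))

end RootsOfUnity

namespace Matrix
variable {K : Type*} [CommRing K]

theorem fin_two_symm_traceless_sq (a b : K) :
    !![a, b; b, -a] ^ 2 = (a ^ 2 + b ^ 2) • (1 : Matrix (Fin 2) (Fin 2) K) := by
  ext i j
  fin_cases i <;> fin_cases j <;> simp [sq] <;> ring

theorem fin_two_rot_pow_four : (!![0, -1; 1, 0] : Matrix (Fin 2) (Fin 2) K) ^ 4 = 1 := by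
  ext i j
  fin_cases i <;> fin_cases j <;> simp [pow_succ]

theorem fin_two_rot_inv : (!![0, -1; 1, 0] : Matrix (Fin 2) (Fin 2) K)⁻¹ = !![0, 1; -1, 0] :=
  inv_eq_right_inv (by simp [one_fin_two])

theorem fin_two_rot_inv_mul_symm_traceless_mul_rot (a b : K) :
    (!![0, -1; 1, 0] : Matrix (Fin 2) (Fin 2) K)⁻¹ * !![a, b; b, -a] * !![0, -1; 1, 0]
      = -!![a, b; b, -a] := by
  rw [fin_two_rot_inv]
  ext i j
  fin_cases i <;> fin_cases j <;> simp

variable {n : Type*} [Fintype n] [DecidableEq n]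

theorem inv_mul_smul_one_add_smul_mul_of_inv_mul_mul_eq_neg {A B : Matrix n n K}
    (hB : IsUnit B.det) (hA : B⁻¹ * A * B = -A) (c d : K) :
    B⁻¹ * (c • 1 + d • A) * B = c • 1 - d • A := by
  simp only [Matrix.mul_add, Matrix.add_mul, Matrix.mul_smul, Matrix.smul_mul, Matrix.mul_one,
    nonsing_inv_mul B hB, hA, smul_neg, sub_eq_add_neg]

theorem inv_eq_smul_one_sub_of_sq_eq {M : Matrix n n K} {θ : K} (hM : M ^ 2 = θ • M - 1) :
    M⁻¹ = θ • 1 - M :=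
  inv_eq_right_inv (by rw [Matrix.mul_sub, Matrix.mul_smul, Matrix.mul_one, ← sq, hM]; abel)

theorem notMem_range_algebraMap_of_apply_ne_zero {M : Matrix n n K} {i j : n} (hij : i ≠ j)
    (hM : M i j ≠ 0) : M ∉ (algebraMap K (Matrix n n K)).range := by
  rintro ⟨c, rfl⟩
  simp [algebraMap_matrix_apply, hij] at hM

end Matrix

open Polynomial in
theorem stmt18_general {K L : Type*} [Field K] [Fintype K] [Field L] [Algebra K L]
    (m : ℕ) (hm3 : 3 ≤ m)
    (hcard : (Fintype.card K).Coprime (2 * m))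
    (ζ : L) (hζ : IsPrimitiveRoot ζ m)
    (θ : K) (hθ : algebraMap K L θ = ζ + ζ⁻¹)
    (α β : K) (hβ : β ≠ 0) (hαβ : α ^ 2 + β ^ 2 = θ ^ 2 - 4)
    (A Atil B : Matrix (Fin 2) (Fin 2) K)
    (hA : A = !![α, β; β, -α])
    (hAtil : Atil = ((2 : K)⁻¹ * θ) • (1 : Matrix (Fin 2) (Fin 2) K) + (2 : K)⁻¹ • A)
    (hB : B = !![0, -1; 1, 0]) :
    Atil ^ m = 1 ∧ B ^ 4 = 1 ∧ B⁻¹ * Atil * B = Atil⁻¹ ∧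
    minpoly K Atil = X ^ 2 - C θ * X + 1 := by
  have h2 : (2 : K) ≠ 0 :=
    two_ne_zero_of_odd_card (Nat.coprime_two_right.mp (hcard.coprime_dvd_right (dvd_mul_right 2 m)))
  have hAsq : A ^ 2 = (θ ^ 2 - 4) • 1 := by rw [hA, Matrix.fin_two_symm_traceless_sq, hαβ]
  have hAtilsq : Atil ^ 2 = θ • Atil - 1 := hAtil ▸ sq_eq_smul_sub_one_of_sq_eq h2 hAsq
  have hroot := aeval_X_sq_sub_C_mul_X_add_one hAtilsq
  refine ⟨?_, hB ▸ Matrix.fin_two_rot_pow_four, ?_, ?_⟩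
  · have hdvd := X_sq_sub_C_mul_X_add_one_dvd_X_pow_sub_one hθ hζ.pow_eq_one (hζ.ne_inv hm3)
    simpa [sub_eq_zero] using aeval_eq_zero_of_dvd_aeval_eq_zero hdvd hroot
  · have hBA : B⁻¹ * A * B = -A := by
      rw [hA, hB, Matrix.fin_two_rot_inv_mul_symm_traceless_mul_rot]
    have hBunit : IsUnit B.det := by simp [hB]
    rw [Matrix.inv_eq_smul_one_sub_of_sq_eq hAtilsq, hAtil,
      Matrix.inv_mul_smul_one_add_smul_mul_of_inv_mul_mul_eq_neg hBunit hBA]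
    match_scalars
    · field_simp
      ring
    · ring
  · refine minpoly_eq_of_natDegree_eq_two (by monicity!) (by compute_degree!) hroot
      (Matrix.notMem_range_algebraMap_of_apply_ne_zero (i := 0) (j := 1) (by decide) ?_)
    simpa [hAtil, hA] using ⟨h2, hβ⟩

open Polynomial in
/-- The explicit 2-dimensional representation of the generalized quaternion group
Q_{4m} (m odd) over F_q: with θ = ζ + ζ⁻¹ ∈ F_q (ζ a primitive m-th root of unity in
an extension, ζ ∉ F_q), α, β ∈ F_q with β ≠ 0 and α² + β² = θ² − 4, set
Ã = (θ/2)I + (1/2)[[α,β],[β,−α]] and B = [[0,−1],[1,0]]. Then Ã^m = I, B⁴ = I,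
B⁻¹ÃB = Ã⁻¹, and the minimal polynomial of Ã is x² − θx + 1. -/
theorem stmt18 {K L : Type*} [Field K] [Fintype K] [Field L] [Algebra K L]
    (m : ℕ) (hm : Odd m) (hm3 : 3 ≤ m)
    (hcard : (Fintype.card K).Coprime (2 * m))
    (ζ : L) (hζ : IsPrimitiveRoot ζ m) (hζK : ζ ∉ Set.range (algebraMap K L))
    (θ : K) (hθ : algebraMap K L θ = ζ + ζ⁻¹)
    (α β : K) (hβ : β ≠ 0) (hαβ : α ^ 2 + β ^ 2 = θ ^ 2 - 4)
    (A Atil B : Matrix (Fin 2) (Fin 2) K)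
    (hA : A = !![α, β; β, -α])
    (hAtil : Atil = ((2 : K)⁻¹ * θ) • (1 : Matrix (Fin 2) (Fin 2) K) + (2 : K)⁻¹ • A)
    (hB : B = !![0, -1; 1, 0]) :
    Atil ^ m = 1 ∧ B ^ 4 = 1 ∧ B⁻¹ * Atil * B = Atil⁻¹ ∧
    minpoly K Atil = X ^ 2 - C θ * X + 1 :=
  stmt18_general m hm3 hcard ζ hζ θ hθ α β hβ hαβ A Atil B hA hAtil hB
end
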